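/- arXiv:2110.10956 — 3 statements merged into one kernel-verified Lean document; each statement's English description precedes it below -/
import Mathlib

section
/- Let H be a real Hilbert space, Σ : H → H a bounded self-adjoint positive operator with positive square root Σ^{1/2}, M, b ≥ 1 integers, τ > 0, and β* ∈ H. For each m = 1,…,M let X_m : H → ℝ^b be a bounded linear operator with X_m X_mᵀ invertible, and set X_m† = X_mᵀ(X_m X_mᵀ)^{-1}. Let ε^{(1)},…,ε^{(M)} : Ω → ℝ^b be an independent family of mean-zero random vectors, each satisfying E[exp(⟨v, ε^{(m)}⟩)] ≤ exp((τ²/2)‖v‖²) for all v ∈ ℝ^b. Define Y_m = X_m β* + ε^{(m)}, β̂_m = X_m† Y_m and β̄_M = (1/M)·Σ_{m=1}^M β̂_m. Then E[‖Σ^{1/2}(β̄_M − E[β̄_M])‖²] ≤ (8τ²/M²)·Σ_{m=1}^M Tr[(X_m†)ᵀ Σ X_m†], where (X_m†)ᵀ Σ X_m† is a (self-adjoint positive) operator on ℝ^b and Tr denotes its trace. -/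
/-!
Centring leaves `β̄ − E β̄ = M⁻¹ ∑ₘ X_m† ε⁽ᵐ⁾`. By independence and zero means the cross terms
`E⟪Σ^{1/2} X_m† ε⁽ᵐ⁾, Σ^{1/2} X_k† ε⁽ᵏ⁾⟫`, `m ≠ k`, vanish, so the left side is `M⁻²` times
`∑ₘ E⟪A_m ε⁽ᵐ⁾, ε⁽ᵐ⁾⟫` with `A_m = (X_m†)ᵀ Σ X_m† = (Σ^{1/2} X_m†)ᵀ (Σ^{1/2} X_m†)` positive.
In an eigenbasis `(uᵢ)` of `A_m` this is `∑ᵢ λᵢ E⟪uᵢ, ε⁽ᵐ⁾⟫²` with `λᵢ ≥ 0` and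
`∑ᵢ λᵢ = Tr A_m`, and each `⟪uᵢ, ε⁽ᵐ⁾⟫` is `τ²`-sub-Gaussian, so its second moment is at most
`8τ²`: compare `x²` with `2(eˣ + e⁻ˣ − 2)`.
-/

open MeasureTheory ProbabilityTheory ContinuousLinearMap
open scoped RealInnerProductSpace

noncomputable section

/-- Moore–Penrose pseudoinverse `X† = Xᵀ (X Xᵀ)⁻¹` of an operator with invertible Gram
operator `X Xᵀ`. -/
def pseudoInv {H : Type*} [NormedAddCommGroup H] [InnerProductSpace ℝ H] [CompleteSpace H]
    {b : ℕ} (X : H →L[ℝ] EuclideanSpace ℝ (Fin b)) :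
    EuclideanSpace ℝ (Fin b) →L[ℝ] H :=
  (adjoint X).comp (Ring.inverse (X.comp (adjoint X)))

open scoped NNReal

section

variable {Ω : Type*} [MeasurableSpace Ω] {μ : Measure Ω}
variable {E F : Type*} [NormedAddCommGroup E] [InnerProductSpace ℝ E]
  [NormedAddCommGroup F] [InnerProductSpace ℝ F]

lemma Real.sq_le_two_mul_exp_add_exp_neg_sub_two (x : ℝ) :
    x ^ 2 ≤ 2 * (Real.exp x + Real.exp (-x) - 2) := by
  rcases le_total 0 x with hx | hx
  · nlinarith [Real.quadratic_le_exp_of_nonneg hx, Real.add_one_le_exp (-x)]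
  · nlinarith [Real.quadratic_le_exp_of_nonneg (neg_nonneg.mpr hx), Real.add_one_le_exp x]

namespace ProbabilityTheory.HasSubgaussianMGF

lemma integral_sq_le [IsProbabilityMeasure μ] {X : Ω → ℝ} {c : ℝ≥0}
    (h : HasSubgaussianMGF X c μ) : ∫ ω, X ω ^ 2 ∂μ ≤ 8 * c := by
  rcases eq_or_ne c 0 with rfl | hc
  · have : (fun ω ↦ X ω ^ 2) =ᵐ[μ] 0 := by
      filter_upwards [h.ae_eq_zero_of_hasSubgaussianMGF_zero] with ω hω
      simp [hω]
    simp [integral_congr_ae this]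
  have hc : (0 : ℝ) < c := by positivity
  -- at `t = √(2 / c)` the sub-Gaussian bounds on `mgf X μ (± t)` are exactly `e`
  set t := Real.sqrt (2 / c)
  have ht : t ^ 2 = 2 / c := Real.sq_sqrt (by positivity)
  have hmgf : ∀ s : ℝ, s ^ 2 = t ^ 2 → mgf X μ s ≤ Real.exp 1 := fun s hs ↦ by
    refine (h.mgf_le s).trans_eq ?_
    rw [hs, ht]; field_simp
  have hint : ∀ s : ℝ, Integrable (fun ω ↦ Real.exp (s * X ω)) μ := h.integrable_exp_mul
  have hsum : Integrable (fun ω ↦ Real.exp (t * X ω) + Real.exp (-t * X ω)) μ :=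
    (hint t).add (hint (-t))
  have hmoment : t ^ 2 * ∫ ω, X ω ^ 2 ∂μ ≤ 2 * (mgf X μ t + mgf X μ (-t) - 2) := calc
    t ^ 2 * ∫ ω, X ω ^ 2 ∂μ = ∫ ω, (t * X ω) ^ 2 ∂μ := by
      simp_rw [mul_pow, integral_const_mul]
    _ ≤ ∫ ω, 2 * (Real.exp (t * X ω) + Real.exp (-t * X ω) - 2) ∂μ := by
      refine integral_mono ?_ ?_ fun ω ↦ ?_
      · simpa [mul_pow] using ((h.memLp 2).integrable_sq).const_mul (t ^ 2)
      · exact (hsum.sub (integrable_const 2)).const_mul 2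
      · simpa using Real.sq_le_two_mul_exp_add_exp_neg_sub_two (t * X ω)
    _ = 2 * (mgf X μ t + mgf X μ (-t) - 2) := by
      rw [integral_const_mul, integral_sub hsum (integrable_const _),
        integral_add (hint t) (hint (-t))]
      simp [mgf]
  have hbound : t ^ 2 * ∫ ω, X ω ^ 2 ∂μ ≤ 4 * (Real.exp 1 - 1) :=
    hmoment.trans (by linarith [hmgf t rfl, hmgf (-t) (neg_sq t)])
  rw [ht, div_mul_eq_mul_div, div_le_iff₀ hc] at hbound
  nlinarith [Real.exp_one_lt_d9]

end ProbabilityTheory.HasSubgaussianMGF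

lemma hasSubgaussianMGF_inner_of_integral_exp_le {Y : Ω → E} {σ : ℝ}
    (h : ∀ v : E, Integrable (fun ω ↦ Real.exp ⟪v, Y ω⟫) μ ∧
      ∫ ω, Real.exp ⟪v, Y ω⟫ ∂μ ≤ Real.exp (σ ^ 2 / 2 * ‖v‖ ^ 2)) (v : E) :
    HasSubgaussianMGF (fun ω ↦ ⟪v, Y ω⟫) (‖σ‖₊ ^ 2 * ‖v‖₊ ^ 2) μ where
  integrable_exp_mul t := by simpa [real_inner_smul_left] using (h (t • v)).1
  mgf_le t := by
    convert (h (t • v)).2 using 1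
    · simp [mgf, real_inner_smul_left]
    · congr 1
      simp only [NNReal.coe_mul, NNReal.coe_pow, coe_nnnorm, norm_smul, mul_pow,
        Real.norm_eq_abs, sq_abs]
      ring

lemma memLp_of_forall_memLp_inner [FiniteDimensional ℝ E] {Y : Ω → E} {p : ENNReal}
    (h : ∀ v : E, MemLp (fun ω ↦ ⟪v, Y ω⟫) p μ) : MemLp Y p μ := by
  let b := stdOrthonormalBasis ℝ E
  have hY : Y = fun ω ↦ ∑ i, ⟪b i, Y ω⟫ • b i := funext fun ω ↦ (b.sum_repr' (Y ω)).symm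
  rw [hY]
  exact memLp_finsetSum _ fun i _ ↦ (toSpanSingleton ℝ (b i)).comp_memLp' (h (b i))

lemma MeasureTheory.MemLp.integrable_inner {f g : Ω → E} (hf : MemLp f 2 μ) (hg : MemLp g 2 μ) :
    Integrable (fun ω ↦ ⟪f ω, g ω⟫) μ :=
  (hf.norm.integrable_mul hg.norm).mono' (hf.1.inner hg.1)
    (.of_forall fun ω ↦ norm_inner_le_norm (f ω) (g ω))

lemma ProbabilityTheory.IndepFun.integral_inner_eq [FiniteDimensional ℝ E] [MeasurableSpace E]
    [BorelSpace E]
    {ξ η : Ω → E} (h : IndepFun ξ η μ) (hξ : Integrable ξ μ) (hη : Integrable η μ) :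
    ∫ ω, ⟪ξ ω, η ω⟫ ∂μ = ⟪∫ ω, ξ ω ∂μ, ∫ ω, η ω ∂μ⟫ := by
  let b := stdOrthonormalBasis ℝ E
  have hsum : ∀ x y : E, ⟪x, y⟫ = ∑ i, ⟪b i, x⟫ * ⟪b i, y⟫ := fun x y ↦ by
    rw [← b.sum_inner_mul_inner x y]
    simp_rw [real_inner_comm x]
  have hcoord : ∀ i, IndepFun (fun ω ↦ ⟪b i, ξ ω⟫) (fun ω ↦ ⟪b i, η ω⟫) μ := fun i ↦
    h.comp (continuous_const.inner continuous_id).measurable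
      (continuous_const.inner continuous_id).measurable
  rw [hsum]
  conv_lhs => enter [2, ω]; rw [hsum]
  rw [integral_finsetSum (f := fun i ω ↦ ⟪b i, ξ ω⟫ * ⟪b i, η ω⟫) _ fun i _ ↦
    (hcoord i).integrable_mul (hξ.const_inner _) (hη.const_inner _)]
  refine Finset.sum_congr rfl fun i _ ↦ ?_
  rw [← integral_inner hξ, ← integral_inner hη]
  exact (hcoord i).integral_mul_eq_mul_integral (hξ.const_inner _).1 (hη.const_inner _).1

lemma LinearMap.IsPositive.integral_inner_le_mul_trace [FiniteDimensional ℝ E]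
    {A : E →ₗ[ℝ] E} (hA : A.IsPositive) {Y : Ω → E} (hY : MemLp Y 2 μ) {C : ℝ}
    (hC : ∀ v : E, ∫ ω, ⟪v, Y ω⟫ ^ 2 ∂μ ≤ C * ‖v‖ ^ 2) :
    ∫ ω, ⟪A (Y ω), Y ω⟫ ∂μ ≤ C * LinearMap.trace ℝ E A := by
  let u := hA.isSymmetric.eigenvectorBasis rfl
  let ev := hA.isSymmetric.eigenvalues rfl
  have hdiag : ∀ y : E, ⟪A y, y⟫ = ∑ i, ev i * ⟪u i, y⟫ ^ 2 := fun y ↦ by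
    rw [← u.sum_inner_mul_inner]
    refine Finset.sum_congr rfl fun i _ ↦ ?_
    rw [hA.isSymmetric, hA.isSymmetric.apply_eigenvectorBasis, real_inner_smul_right,
      real_inner_comm y, RCLike.ofReal_real_eq_id, id_eq]
    ring
  have hint : ∀ i, Integrable (fun ω ↦ ⟪u i, Y ω⟫ ^ 2) μ := fun i ↦
    (hY.const_inner _).integrable_sq
  simp_rw [hdiag]
  rw [integral_finsetSum _ fun i _ ↦ (hint i).const_mul _,
    hA.isSymmetric.trace_eq_sum_eigenvalues rfl, RCLike.ofReal_real_eq_id, id_eq, Finset.mul_sum]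
  refine Finset.sum_le_sum fun i _ ↦ ?_
  rw [integral_const_mul]
  simpa [u.norm_eq_one, mul_comm C] using
    mul_le_mul_of_nonneg_left (hC (u i)) (hA.nonneg_eigenvalues rfl i)

lemma sub_integral_const_add [IsProbabilityMeasure μ] [CompleteSpace F] (c : F) {g : Ω → F}
    (hg : Integrable g μ) (hg0 : ∫ ω, g ω ∂μ = 0) (ω : Ω) :
    c + g ω - ∫ ω', (c + g ω') ∂μ = g ω := by
  rw [integral_add (integrable_const c) hg, hg0]
  simp

lemma integral_norm_sum_sq_eq_sum {ι : Type*} [Fintype ι] {W : ι → Ω → F}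
    (hW : ∀ i, MemLp (W i) 2 μ) (horth : ∀ i j, i ≠ j → ∫ ω, ⟪W i ω, W j ω⟫ ∂μ = 0) :
    ∫ ω, ‖∑ i, W i ω‖ ^ 2 ∂μ = ∑ i, ∫ ω, ‖W i ω‖ ^ 2 ∂μ := by
  have hint : ∀ i j, Integrable (fun ω ↦ ⟪W i ω, W j ω⟫) μ := fun i j ↦
    (hW i).integrable_inner (hW j)
  simp_rw [← real_inner_self_eq_norm_sq, sum_inner, inner_sum]
  rw [integral_finsetSum _ fun i _ ↦ integrable_finsetSum _ fun j _ ↦ hint i j]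
  refine Finset.sum_congr rfl fun i _ ↦ ?_
  rw [integral_finsetSum _ fun j _ ↦ hint i j, Finset.sum_eq_single i
    (fun j _ hji ↦ horth i j hji.symm) (by simp)]

lemma integral_norm_sum_map_sq_le [IsFiniteMeasure μ] [FiniteDimensional ℝ E]
    [MeasurableSpace E] [BorelSpace E] [CompleteSpace F] {ι : Type*} [Fintype ι]
    (L : ι → E →L[ℝ] F) {Y : ι → Ω → E} (hindep : iIndepFun Y μ) (hY : ∀ i, MemLp (Y i) 2 μ)
    (hmean : ∀ i, ∫ ω, Y i ω ∂μ = 0) {C : ℝ}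
    (hC : ∀ i, ∀ v : E, ∫ ω, ⟪v, Y i ω⟫ ^ 2 ∂μ ≤ C * ‖v‖ ^ 2) :
    ∫ ω, ‖∑ i, L i (Y i ω)‖ ^ 2 ∂μ
      ≤ C * ∑ i, LinearMap.trace ℝ E (adjoint (L i) ∘L L i : E →ₗ[ℝ] E) := by
  have horth : ∀ i j, i ≠ j → ∫ ω, ⟪L i (Y i ω), L j (Y j ω)⟫ ∂μ = 0 := fun i j hij ↦ by
    let B := adjoint (L j) ∘L L i
    have hB : IndepFun (fun ω ↦ B (Y i ω)) (Y j) μ :=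
      (hindep.indepFun hij).comp B.continuous.measurable measurable_id
    simp_rw [← adjoint_inner_left (L j)]
    refine (hB.integral_inner_eq (B.integrable_comp ((hY i).integrable one_le_two))
      ((hY j).integrable one_le_two)).trans ?_
    rw [hmean j, inner_zero_right]
  have hdiag : ∀ i, ∫ ω, ‖L i (Y i ω)‖ ^ 2 ∂μ
      ≤ C * LinearMap.trace ℝ E (adjoint (L i) ∘L L i : E →ₗ[ℝ] E) := fun i ↦ by
    simp_rw [apply_norm_sq_eq_inner_adjoint_left, RCLike.re_to_real]
    exact (isPositive_adjoint_comp_self (L i)).toLinearMap.integral_inner_le_mul_trace (hY i)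
      (hC i)
  rw [integral_norm_sum_sq_eq_sum (W := fun i ω ↦ L i (Y i ω))
    (fun i ↦ (L i).comp_memLp' (hY i)) horth, Finset.mul_sum]
  exact Finset.sum_le_sum fun i _ ↦ hdiag i

end

theorem statement4_general {Ω : Type*} [MeasurableSpace Ω] (P : Measure Ω) [IsProbabilityMeasure P]
    {H : Type*} [NormedAddCommGroup H] [InnerProductSpace ℝ H] [CompleteSpace H]
    (S Sh : H →L[ℝ] H)
    (hShsa : ∀ u v : H, ⟪Sh u, v⟫ = ⟪u, Sh v⟫)
    (hsq : Sh.comp Sh = S)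
    (M b : ℕ) (τ : ℝ) (βstar : H)
    (X : Fin M → (H →L[ℝ] EuclideanSpace ℝ (Fin b)))
    (ε : Fin M → Ω → EuclideanSpace ℝ (Fin b))
    (hmean : ∀ m, ∫ ω, ε m ω ∂P = 0)
    (hsub : ∀ m, ∀ v : EuclideanSpace ℝ (Fin b),
      Integrable (fun ω => Real.exp ⟪v, ε m ω⟫) P ∧
        ∫ ω, Real.exp ⟪v, ε m ω⟫ ∂P ≤ Real.exp (τ ^ 2 / 2 * ‖v‖ ^ 2))
    (hindep : iIndepFun ε P)
    (βbar : Ω → H)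
    (hβbar : βbar = fun ω =>
      (M : ℝ)⁻¹ • ∑ m : Fin M, pseudoInv (X m) (X m βstar + ε m ω)) :
    ∫ ω, ‖Sh (βbar ω - ∫ ω', βbar ω' ∂P)‖ ^ 2 ∂P
      ≤ 8 * τ ^ 2 / (M : ℝ) ^ 2 *
        ∑ m : Fin M,
          LinearMap.trace ℝ (EuclideanSpace ℝ (Fin b))
            (((adjoint (pseudoInv (X m))).comp (S.comp (pseudoInv (X m)))) :
              EuclideanSpace ℝ (Fin b) →ₗ[ℝ] EuclideanSpace ℝ (Fin b)) := by
  have hsubG := fun m ↦ hasSubgaussianMGF_inner_of_integral_exp_le (hsub m)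
  have hL2 : ∀ m, MemLp (ε m) 2 P := fun m ↦
    memLp_of_forall_memLp_inner fun v ↦ (hsubG m v).memLp 2
  have hmoment : ∀ m v, ∫ ω, ⟪v, ε m ω⟫ ^ 2 ∂P ≤ 8 * τ ^ 2 * ‖v‖ ^ 2 := fun m v ↦
    (hsubG m v).integral_sq_le.trans_eq (by push_cast [Real.norm_eq_abs, sq_abs]; ring)
  have hnoise : ∀ m, Integrable (fun ω ↦ pseudoInv (X m) (ε m ω)) P := fun m ↦
    (pseudoInv (X m)).integrable_comp ((hL2 m).integrable one_le_two)
  have hcentred : ∀ ω, βbar ω - ∫ ω', βbar ω' ∂P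
      = (M : ℝ)⁻¹ • ∑ m, pseudoInv (X m) (ε m ω) := by
    simp_rw [hβbar, map_add, Finset.sum_add_distrib, smul_add]
    refine sub_integral_const_add _ ((integrable_finsetSum _ fun m _ ↦ hnoise m).smul _) ?_
    rw [integral_smul, integral_finsetSum _ fun m _ ↦ hnoise m]
    simp [(pseudoInv _).integral_comp_comm ((hL2 _).integrable one_le_two), hmean]
  have hgram : ∀ m, adjoint (Sh ∘L pseudoInv (X m)) ∘L (Sh ∘L pseudoInv (X m))
      = adjoint (pseudoInv (X m)) ∘L (S ∘L pseudoInv (X m)) := fun m ↦ by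
    rw [adjoint_comp, (isSelfAdjoint_iff_isSymmetric.mpr hShsa).adjoint_eq, ← hsq]
    rfl
  have hvar : ∫ ω, ‖Sh (βbar ω - ∫ ω', βbar ω' ∂P)‖ ^ 2 ∂P
      = ((M : ℝ)⁻¹) ^ 2 * ∫ ω, ‖∑ m, (Sh ∘L pseudoInv (X m)) (ε m ω)‖ ^ 2 ∂P := by
    simp_rw [hcentred, map_smul, map_sum, norm_smul, mul_pow, integral_const_mul]
    simp
  rw [hvar]
  refine (mul_le_mul_of_nonneg_left (integral_norm_sum_map_sq_le _ hindep hL2 hmean hmoment)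
    (by positivity)).trans_eq ?_
  simp_rw [hgram]
  ring

theorem statement4 {Ω : Type*} [MeasurableSpace Ω] (P : Measure Ω) [IsProbabilityMeasure P]
    {H : Type*} [NormedAddCommGroup H] [InnerProductSpace ℝ H] [CompleteSpace H]
    (S Sh : H →L[ℝ] H)
    (hSsa : ∀ u v : H, ⟪S u, v⟫ = ⟪u, S v⟫) (hSpos : ∀ v : H, 0 ≤ ⟪S v, v⟫)
    (hShsa : ∀ u v : H, ⟪Sh u, v⟫ = ⟪u, Sh v⟫) (hShpos : ∀ v : H, 0 ≤ ⟪Sh v, v⟫)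
    (hsq : Sh.comp Sh = S)
    (M b : ℕ) (hM : 1 ≤ M) (hb : 1 ≤ b) (τ : ℝ) (hτ : 0 < τ) (βstar : H)
    (X : Fin M → (H →L[ℝ] EuclideanSpace ℝ (Fin b)))
    (hinv : ∀ m, IsUnit ((X m).comp (adjoint (X m))))
    (ε : Fin M → Ω → EuclideanSpace ℝ (Fin b))
    (hmeas : ∀ m, Measurable (ε m))
    (hmean : ∀ m, ∫ ω, ε m ω ∂P = 0)
    (hsub : ∀ m, ∀ v : EuclideanSpace ℝ (Fin b),
      Integrable (fun ω => Real.exp ⟪v, ε m ω⟫) P ∧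
        ∫ ω, Real.exp ⟪v, ε m ω⟫ ∂P ≤ Real.exp (τ ^ 2 / 2 * ‖v‖ ^ 2))
    (hindep : iIndepFun ε P)
    (βbar : Ω → H)
    (hβbar : βbar = fun ω =>
      (M : ℝ)⁻¹ • ∑ m : Fin M, pseudoInv (X m) (X m βstar + ε m ω)) :
    ∫ ω, ‖Sh (βbar ω - ∫ ω', βbar ω' ∂P)‖ ^ 2 ∂P
      ≤ 8 * τ ^ 2 / (M : ℝ) ^ 2 *
        ∑ m : Fin M,
          LinearMap.trace ℝ (EuclideanSpace ℝ (Fin b))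
            (((adjoint (pseudoInv (X m))).comp (S.comp (pseudoInv (X m)))) :
              EuclideanSpace ℝ (Fin b) →ₗ[ℝ] EuclideanSpace ℝ (Fin b)) :=
  statement4_general P S Sh hShsa hsq M b τ βstar X ε hmean hsub hindep βbar hβbar
end
end

section
/- Let ε > 0. (i) For every integer k ≥ 0, (k+1)^{1+ε} · Σ_{j=k+1}^∞ j^{-(1+ε)} ≥ (k+1)/ε; in other words, for the sequence λ_j = j^{-(1+ε)} the effective rank satisfies r_k = (Σ_{j>k} λ_j)/λ_{k+1} ≥ (k+1)/ε. (ii) Consequently, for every a > 1 and every real b > 0, the effective dimension k*_b = min{k ≥ 0 : r_k ≥ a·b} satisfies k*_b ≤ a·ε·b. -/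
/-!
Since `x ↦ x ^ (-(1 + ε))` is decreasing, the tail sum `∑_{j > k} λ_j` dominates
`∫_{k+1}^∞ x ^ (-(1 + ε)) dx = (k + 1) ^ (-ε) / ε`, which gives `r_k ≥ (k + 1) / ε`.
If `k*_b = m + 1`, then minimality gives `r_m < a b`, hence `m + 1 < a ε b`.
-/

open Real Set

lemma rpow_neg_div_le_tsum_rpow_add {ε : ℝ} (hε : 0 < ε) {N : ℕ} (hN : 0 < N) :
    (N : ℝ) ^ (-ε) / ε ≤ ∑' n : ℕ, ((N : ℝ) + n) ^ (-(1 + ε)) := by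
  have hN' : (0 : ℝ) < N := by exact_mod_cast hN
  have anti : AntitoneOn (fun x : ℝ ↦ x ^ (-(1 + ε))) (Ici (N : ℝ)) := fun x hx y _ hxy ↦
    rpow_le_rpow_of_nonpos (hN'.trans_le hx) hxy (by linarith)
  have summable : Summable (fun n : ℕ ↦ (n : ℝ) ^ (-(1 + ε))) :=
    summable_nat_rpow.mpr (by linarith)
  have integral_eq : ∫ x in Ioi (N : ℝ), x ^ (-(1 + ε)) = (N : ℝ) ^ (-ε) / ε := by
    rw [integral_Ioi_rpow_of_lt (by linarith) hN']
    ring_nf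
  calc (N : ℝ) ^ (-ε) / ε = ∫ x in Ioi (N : ℝ), x ^ (-(1 + ε)) := integral_eq.symm
    _ ≤ ∑' n : ℕ, ((n + N : ℕ) : ℝ) ^ (-(1 + ε)) :=
      anti.integral_le_tsum_comp_add N summable fun x hx ↦ rpow_nonneg (hN'.trans hx).le _
    _ = ∑' n : ℕ, ((N : ℝ) + n) ^ (-(1 + ε)) := by simp only [Nat.cast_add, add_comm]

lemma succ_div_le_rpow_mul_tsum {ε : ℝ} (hε : 0 < ε) (k : ℕ) :
    ((k : ℝ) + 1) / ε ≤
      ((k : ℝ) + 1) ^ (1 + ε) * ∑' j : ℕ, ((k : ℝ) + 1 + j) ^ (-(1 + ε)) := by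
  have hk : (0 : ℝ) < k + 1 := by positivity
  have tail := rpow_neg_div_le_tsum_rpow_add hε k.succ_pos
  push_cast at tail
  calc ((k : ℝ) + 1) / ε = ((k : ℝ) + 1) ^ (1 + ε) * (((k : ℝ) + 1) ^ (-ε) / ε) := by
        rw [mul_div_assoc', ← rpow_add hk, add_neg_cancel_right, rpow_one]
    _ ≤ _ := by gcongr

lemma IsLeast.natCast_le_mul_of_succ_div_le {r : ℕ → ℝ} {ε t : ℝ} (hε : 0 < ε) (ht : 0 ≤ t)
    (hr : ∀ k : ℕ, ((k : ℝ) + 1) / ε ≤ r k) {kstar : ℕ} (h : IsLeast {k | t ≤ r k} kstar) :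
    (kstar : ℝ) ≤ ε * t := by
  obtain _ | m := kstar
  · simpa using mul_nonneg hε.le ht
  · have hm : r m < t := not_le.mp fun hm ↦ by simpa using h.2 hm
    have := (hr m).trans_lt hm
    rw [div_lt_iff₀ hε] at this
    push_cast
    linarith

theorem statement9 (ε : ℝ) (hε : 0 < ε) :
    (∀ k : ℕ,
      ((k : ℝ) + 1) / ε ≤
        ((k : ℝ) + 1) ^ (1 + ε) * ∑' j : ℕ, ((k : ℝ) + 1 + (j : ℝ)) ^ (-(1 + ε))) ∧
    (∀ k : ℕ,
      ((k : ℝ) + 1) / ε ≤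
        (∑' j : ℕ, ((k : ℝ) + 1 + (j : ℝ)) ^ (-(1 + ε))) / (((k : ℝ) + 1) ^ (-(1 + ε)))) ∧
    (∀ a b : ℝ, 1 < a → 0 < b → ∀ kstar : ℕ,
      IsLeast {k : ℕ |
          a * b ≤
            (∑' j : ℕ, ((k : ℝ) + 1 + (j : ℝ)) ^ (-(1 + ε))) / (((k : ℝ) + 1) ^ (-(1 + ε)))}
        kstar →
      (kstar : ℝ) ≤ a * ε * b) := by
  have rank_bound : ∀ k : ℕ, ((k : ℝ) + 1) / ε ≤
      (∑' j : ℕ, ((k : ℝ) + 1 + (j : ℝ)) ^ (-(1 + ε))) / (((k : ℝ) + 1) ^ (-(1 + ε))) := by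
    intro k
    rw [rpow_neg (by positivity), div_inv_eq_mul, mul_comm]
    exact succ_div_le_rpow_mul_tsum hε k
  refine ⟨succ_div_le_rpow_mul_tsum hε, rank_bound, fun a b ha hb kstar h ↦ ?_⟩
  calc (kstar : ℝ) ≤ ε * (a * b) := h.natCast_le_mul_of_succ_div_le hε (by positivity) rank_bound
    _ = a * ε * b := by ring
end

section
/- Let ε > 0 and let λ_j = j^{-(1+ε)} for j ≥ 1. Then for every integer k ≥ 1: (i) R_k := (Σ_{j>k} λ_j)²/(Σ_{j>k} λ_j²) ≥ (k/ε²)·(1 − 1/(k+1))^{2ε}; and (ii) r_k := (Σ_{j>k} λ_j)/λ_{k+1} ≤ (2k/ε)·e^{ε}. -/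
/-!
Both effective ranks reduce to two-sided bounds on the tails of `∑ (c + j) ^ (-(1 + t))`.
The tangent line of the convex function `x ↦ x ^ (-t)` gives
`t (x + 1) ^ (-(1 + t)) ≤ x ^ (-t) - (x + 1) ^ (-t) ≤ t x ^ (-(1 + t))`, and the middle term
telescopes, so `(k + 1) ^ (-ε) / ε ≤ ∑_{j > k} λ_j ≤ k ^ (-ε) / ε` and
`∑_{j > k} λ_j ^ 2 ≤ k ^ (-(1 + 2ε)) / (1 + 2ε)`. What remains is algebra, together with
`(1 + 1/k) ^ ε ≤ e ^ ε`.
-/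

open Real Filter Topology

lemma one_sub_mul_le_one_add_rpow_neg {s t : ℝ} (hs : -1 < s) (ht : 0 ≤ t) :
    1 - t * s ≤ (1 + s) ^ (-t) := by
  have hpos : 0 < 1 + s := by linarith
  calc 1 - t * s ≤ 1 + -t * log (1 + s) := by
        nlinarith [log_le_sub_one_of_pos hpos]
    _ ≤ exp (log (1 + s) * -t) := by linarith [add_one_le_exp (log (1 + s) * -t)]
    _ = (1 + s) ^ (-t) := (rpow_def_of_pos hpos _).symm

lemma rpow_neg_sub_mul_le_rpow_neg {a b t : ℝ} (ha : 0 < a) (hb : 0 < b) (ht : 0 ≤ t) :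
    a ^ (-t) - t * a ^ (-(1 + t)) * (b - a) ≤ b ^ (-t) := by
  have hs : -1 < (b - a) / a := by rw [lt_div_iff₀ ha]; linarith
  have hb' : b = a * (1 + (b - a) / a) := by field_simp; ring
  have hsplit : a ^ (-(1 + t)) = a ^ (-t) / a := by
    rw [neg_add, rpow_add ha, rpow_neg_one, div_eq_mul_inv, mul_comm]
  calc a ^ (-t) - t * a ^ (-(1 + t)) * (b - a) = a ^ (-t) * (1 - t * ((b - a) / a)) := by
        rw [hsplit]; ring
    _ ≤ a ^ (-t) * (1 + (b - a) / a) ^ (-t) := by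
        gcongr; exact one_sub_mul_le_one_add_rpow_neg hs ht
    _ = b ^ (-t) := by
        rw [← mul_rpow ha.le (by linarith), ← hb']

lemma Antitone.hasSum_sub_succ {f : ℕ → ℝ} {l : ℝ} (hf : Antitone f)
    (hl : Tendsto f atTop (𝓝 l)) : HasSum (fun n ↦ f n - f (n + 1)) (f 0 - l) := by
  rw [hasSum_iff_tendsto_nat_of_nonneg fun n ↦ sub_nonneg.2 (hf n.le_succ)]
  simp_rw [Finset.sum_range_sub']
  exact tendsto_const_nhds.sub hl

lemma hasSum_rpow_neg_sub {a t : ℝ} (ha : 0 < a) (ht : 0 < t) :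
    HasSum (fun j : ℕ ↦ (a + j) ^ (-t) - (a + j + 1) ^ (-t)) (a ^ (-t)) := by
  have hanti : Antitone fun j : ℕ ↦ (a + j) ^ (-t) := antitone_nat_of_succ_le fun j ↦ by
    push_cast
    exact rpow_le_rpow_of_nonpos (by positivity) (by linarith) (by linarith)
  have hlim : Tendsto (fun j : ℕ ↦ (a + j) ^ (-t)) atTop (𝓝 0) :=
    (tendsto_rpow_neg_atTop ht).comp
      (tendsto_atTop_add_const_left _ a tendsto_natCast_atTop_atTop)
  simpa [add_assoc] using hanti.hasSum_sub_succ hlim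

lemma mul_rpow_neg_succ_le_sub {x t : ℝ} (hx : 0 < x) (ht : 0 ≤ t) :
    t * (x + 1) ^ (-(1 + t)) ≤ x ^ (-t) - (x + 1) ^ (-t) := by
  have := rpow_neg_sub_mul_le_rpow_neg (a := x + 1) (b := x) (by positivity) hx ht
  linarith

lemma rpow_neg_sub_succ_le_mul {x t : ℝ} (hx : 0 < x) (ht : 0 ≤ t) :
    x ^ (-t) - (x + 1) ^ (-t) ≤ t * x ^ (-(1 + t)) := by
  have := rpow_neg_sub_mul_le_rpow_neg (b := x + 1) hx (by positivity) ht
  linarith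

lemma summable_add_rpow_neg {a t : ℝ} (ha : 0 < a) (ht : 0 < t) :
    Summable fun j : ℕ ↦ (a + j) ^ (-(1 + t)) := by
  refine (summable_nat_add_iff 1).1 <|
    ((hasSum_rpow_neg_sub ha ht).div_const t).summable.of_nonneg_of_le
      (fun j ↦ by positivity) fun j ↦ ?_
  rw [le_div_iff₀ ht, mul_comm]
  simpa [add_assoc] using mul_rpow_neg_succ_le_sub (x := a + j) (by positivity) ht.le

lemma le_tsum_add_rpow_neg {a t : ℝ} (ha : 0 < a) (ht : 0 < t) :
    a ^ (-t) / t ≤ ∑' j : ℕ, (a + j) ^ (-(1 + t)) := by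
  rw [← ((hasSum_rpow_neg_sub ha ht).div_const t).tsum_eq]
  refine Summable.tsum_le_tsum (fun j ↦ ?_) ((hasSum_rpow_neg_sub ha ht).div_const t).summable
    (summable_add_rpow_neg ha ht)
  rw [div_le_iff₀ ht, mul_comm]
  exact rpow_neg_sub_succ_le_mul (by positivity) ht.le

lemma tsum_add_one_add_rpow_neg_le {a t : ℝ} (ha : 0 < a) (ht : 0 < t) :
    ∑' j : ℕ, (a + 1 + j) ^ (-(1 + t)) ≤ a ^ (-t) / t := by
  rw [← ((hasSum_rpow_neg_sub ha ht).div_const t).tsum_eq]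
  refine Summable.tsum_le_tsum (fun j ↦ ?_) (summable_add_rpow_neg (by positivity) ht)
    ((hasSum_rpow_neg_sub ha ht).div_const t).summable
  rw [le_div_iff₀ ht, mul_comm, add_right_comm]
  exact mul_rpow_neg_succ_le_sub (by positivity) ht.le

lemma one_add_inv_rpow_le_exp {x t : ℝ} (hx : 1 ≤ x) (ht : 0 ≤ t) :
    (1 + x⁻¹) ^ t ≤ exp t := by
  calc (1 + x⁻¹) ^ t ≤ exp x⁻¹ ^ t := by
        gcongr; linarith [add_one_le_exp x⁻¹]
    _ = exp (x⁻¹ * t) := (exp_mul _ _).symm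
    _ ≤ exp t := exp_le_exp.2 <| mul_le_of_le_one_left ht (inv_le_one_of_one_le₀ hx)

lemma le_sq_tsum_div_tsum_sq {K ε : ℝ} (hK : 0 < K) (hε : 0 < ε) :
    K / ε ^ 2 * (1 - 1 / (K + 1)) ^ (2 * ε) ≤
      (∑' j : ℕ, (K + 1 + j) ^ (-(1 + ε))) ^ 2 /
        ∑' j : ℕ, ((K + 1 + j) ^ (-(1 + ε))) ^ 2 := by
  have hK1 : 0 < K + 1 := by positivity
  have hsq : ∀ j : ℕ,
      ((K + 1 + j) ^ (-(1 + ε))) ^ 2 = (K + 1 + j) ^ (-(1 + (1 + 2 * ε))) := by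
    intro j
    rw [← rpow_natCast, ← rpow_mul (by positivity)]
    ring_nf
  have hS2 : 0 < ∑' j : ℕ, ((K + 1 + j) ^ (-(1 + ε))) ^ 2 := by
    simp_rw [hsq]
    exact (summable_add_rpow_neg hK1 (by positivity)).tsum_pos
      (fun j ↦ by positivity) 0 (by positivity)
  have hS2_le :
      ∑' j : ℕ, ((K + 1 + j) ^ (-(1 + ε))) ^ 2 ≤ K ^ (-(1 + 2 * ε)) / (1 + 2 * ε) := by
    simp_rw [hsq]
    exact tsum_add_one_add_rpow_neg_le hK (by positivity)
  have hS1_ge : (K + 1) ^ (-ε) / ε ≤ ∑' j : ℕ, (K + 1 + j) ^ (-(1 + ε)) :=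
    le_tsum_add_rpow_neg hK1 hε
  calc K / ε ^ 2 * (1 - 1 / (K + 1)) ^ (2 * ε)
      = K * (K ^ ε) ^ 2 / (ε ^ 2 * ((K + 1) ^ ε) ^ 2) := by
        rw [show 1 - 1 / (K + 1) = K / (K + 1) by field_simp; ring, div_rpow hK.le hK1.le,
          mul_comm 2 ε, rpow_mul hK.le, rpow_mul hK1.le]
        norm_cast
        field_simp
    _ ≤ (1 + 2 * ε) * (K * (K ^ ε) ^ 2) / (ε ^ 2 * ((K + 1) ^ ε) ^ 2) := by
        gcongr ?_ / _
        exact le_mul_of_one_le_left (by positivity) (by linarith)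
    _ = ((K + 1) ^ (-ε) / ε) ^ 2 / (K ^ (-(1 + 2 * ε)) / (1 + 2 * ε)) := by
        rw [rpow_neg hK1.le, rpow_neg hK.le, rpow_add hK, rpow_one, two_mul, rpow_add hK]
        field_simp
    _ ≤ _ := by gcongr

lemma tsum_div_rpow_neg_le {K ε : ℝ} (hK : 1 ≤ K) (hε : 0 < ε) :
    (∑' j : ℕ, (K + 1 + j) ^ (-(1 + ε))) / (K + 1) ^ (-(1 + ε)) ≤ 2 * K / ε * exp ε := by
  have hK0 : 0 < K := by linarith
  have hK1 : 0 < K + 1 := by linarith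
  calc (∑' j : ℕ, (K + 1 + j) ^ (-(1 + ε))) / (K + 1) ^ (-(1 + ε))
      ≤ K ^ (-ε) / ε / (K + 1) ^ (-(1 + ε)) := by
        gcongr
        exact tsum_add_one_add_rpow_neg_le hK0 hε
    _ = (K + 1) / ε * (1 + K⁻¹) ^ ε := by
        rw [show 1 + K⁻¹ = (K + 1) / K by field_simp, div_rpow hK1.le hK0.le,
          rpow_neg hK0.le, rpow_neg hK1.le, rpow_add hK1, rpow_one]
        field_simp
    _ ≤ 2 * K / ε * exp ε := by
        gcongr
        · linarith
        · exact one_add_inv_rpow_le_exp hK hε.le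

theorem statement10 (ε : ℝ) (hε : 0 < ε) (k : ℕ) (hk : 1 ≤ k) :
    ((k : ℝ) / ε ^ 2) * (1 - 1 / ((k : ℝ) + 1)) ^ (2 * ε) ≤
      (∑' j : ℕ, ((k : ℝ) + 1 + (j : ℝ)) ^ (-(1 + ε))) ^ 2 /
        (∑' j : ℕ, (((k : ℝ) + 1 + (j : ℝ)) ^ (-(1 + ε))) ^ 2) ∧
    (∑' j : ℕ, ((k : ℝ) + 1 + (j : ℝ)) ^ (-(1 + ε))) / (((k : ℝ) + 1) ^ (-(1 + ε)))
      ≤ 2 * (k : ℝ) / ε * Real.exp ε := by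
  have hK : (1 : ℝ) ≤ k := by exact_mod_cast hk
  exact ⟨le_sq_tsum_div_tsum_sq (by linarith) hε, tsum_div_rpow_neg_le hK hε⟩
end
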